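/- Let s be a proper scoring rule on 𝒫, and let H = { p ∈ 𝒫 : s(p) is finite }. Then the function p ↦ E_p s(p), restricted to H, is continuous on H (with respect to the topology of pointwise convergence of p({ω}), ω ∈ Ω). -/

import Mathlib

open Filter Topology

variable {Ω : Type*}

/-- A probability function: nonnegative, finitely additive, total mass one. -/
def IsProbability [Fintype Ω] (p : Set Ω → ℝ) : Prop :=
  (∀ A, 0 ≤ p A) ∧ (∀ A B : Set Ω, Disjoint A B → p (A ∪ B) = p A + p B) ∧ p Set.univ = 1

/-- Expected value `E_p f = Σ_{ω, p({ω}) ≠ 0} p({ω}) f(ω)`.  Since `EReal`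
multiplication satisfies `0 * a = a * 0 = 0` even for infinite `a`, the zero terms
contribute nothing and we may sum over all of `Ω`. -/
noncomputable def expScore [Fintype Ω] (p : Set Ω → ℝ) (f : Ω → EReal) : EReal :=
  ∑ ω, (p {ω} : EReal) * f ω

/-- A score is finite when all of its values are finite. -/
def FiniteScore (f : Ω → EReal) : Prop := ∀ ω, f ω ≠ ⊥ ∧ f ω ≠ ⊤

/-- The topology of pointwise convergence of `p({ω})`, `ω ∈ Ω`, on credence
functions: the topology induced by the map `p ↦ (ω ↦ p {ω})` into `Ω → ℝ`. -/
def singletonTopology (Ω : Type*) [Fintype Ω] : TopologicalSpace (Set Ω → ℝ) :=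
  TopologicalSpace.induced (fun p (ω : Ω) => p {ω}) inferInstance

lemma prob_finset_sum [Fintype Ω] {p : Set Ω → ℝ} (hp : IsProbability p)
    (A : Finset Ω) : p ↑A = ∑ ω ∈ A, p {ω} := by
  classical
  induction A using Finset.induction_on with
  | empty =>
      have h := hp.2.1 ∅ ∅ (by simp)
      simp only [Set.union_self] at h
      simpa using by linarith
  | @insert a A ha ih =>
      have hd : Disjoint ({a} : Set Ω) ↑A := by
        simpa [Set.disjoint_singleton_left] using ha
      have h2 := hp.2.1 {a} ↑A hd
      rw [Finset.coe_insert, Set.insert_eq, h2, ih, Finset.sum_insert ha]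

lemma prob_sum_one [Fintype Ω] {p : Set Ω → ℝ} (hp : IsProbability p) :
    ∑ ω, p {ω} = 1 := by
  have := prob_finset_sum hp Finset.univ
  rw [Finset.coe_univ, hp.2.2] at this
  linarith

lemma expScore_real [Fintype Ω] (p : Set Ω → ℝ) (f : Ω → EReal) (hf : FiniteScore f) :
    expScore p f = ((∑ ω, p {ω} * (f ω).toReal : ℝ) : EReal) := by
  rw [show ((∑ ω, p {ω} * (f ω).toReal : ℝ) : EReal) =
    ∑ ω, ((p {ω} * (f ω).toReal : ℝ) : EReal) from
    map_sum (⟨⟨(fun x : ℝ => (x : EReal)), EReal.coe_zero⟩, EReal.coe_add⟩ : ℝ →+ EReal) _ _]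
  refine Finset.sum_congr rfl fun ω _ => ?_
  rw [EReal.coe_mul, EReal.coe_toReal (hf ω).2 (hf ω).1]

set_option maxHeartbeats 2000000 in
theorem stmt2 [Fintype Ω] [Nonempty Ω] (M : ℝ)
    (s : (Set Ω → ℝ) → Ω → EReal)
    (hbound : ∀ p, IsProbability p → ∀ ω, s p ω ≤ (M : EReal))
    (hproper : ∀ p q, IsProbability p → IsProbability q →
      expScore p (s q) ≤ expScore p (s p)) :
    @ContinuousOn (Set Ω → ℝ) EReal (singletonTopology Ω) _
      (fun p => expScore p (s p))
      {p | IsProbability p ∧ FiniteScore (s p)} := by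
  classical
  letI : TopologicalSpace (Set Ω → ℝ) := singletonTopology Ω
  set H : Set (Set Ω → ℝ) := {p | IsProbability p ∧ FiniteScore (s p)} with hH
  set g : (Set Ω → ℝ) → ℝ := fun p => ∑ ω, p {ω} * (s p ω).toReal with hgdef
  -- real-valued propriety
  have hprop : ∀ p q : Set Ω → ℝ, p ∈ H → q ∈ H →
      ∑ ω, p {ω} * (s q ω).toReal ≤ g p := by
    intro p q hp hq
    have h := hproper p q hp.1 hq.1
    rw [expScore_real p (s q) hq.2, expScore_real p (s p) hp.2] at h
    exact_mod_cast h
  have hnn : ∀ p : Set Ω → ℝ, p ∈ H → ∀ ω, 0 ≤ p {ω} := fun p hp ω => hp.1.1 _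
  have hsum : ∀ p : Set Ω → ℝ, p ∈ H → ∑ ω, p {ω} = 1 := fun p hp => prob_sum_one hp.1
  have hsM : ∀ p : Set Ω → ℝ, p ∈ H → ∀ ω, (s p ω).toReal ≤ M := by
    intro p hp ω
    have h := EReal.toReal_le_toReal (hbound p hp.1 ω) (hp.2 ω).1 (by simp)
    simpa using h
  -- continuity of the real-valued expected score
  have contg : ContinuousOn g H := by
    intro q hq
    rw [ContinuousWithinAt, Metric.tendsto_nhds]
    intro ε hε
    set Mp : ℝ := max M 0 with hMp
    have hMp0 : 0 ≤ Mp := le_max_right _ _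
    set B : ℝ := ∑ ω, |(s q ω).toReal| with hB
    have hB0 : 0 ≤ B := Finset.sum_nonneg fun ω _ => abs_nonneg _
    set K : ℝ := B + Mp with hK
    have hK0 : 0 ≤ K := add_nonneg hB0 hMp0
    set c : ℝ := Finset.univ.inf' Finset.univ_nonempty
      (fun ω => if 0 < q {ω} then q {ω} else 1) with hc
    have hc0 : 0 < c := by
      rw [hc, Finset.lt_inf'_iff]
      intro ω _
      split_ifs with h
      · exact h
      · exact one_pos
    have hcle : ∀ ω, 0 < q {ω} → c ≤ q {ω} := by
      intro ω hω
      have h := Finset.inf'_le (fun ω => if 0 < q {ω} then q {ω} else 1)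
        (Finset.mem_univ ω)
      rw [if_pos hω] at h
      exact le_trans (le_of_eq hc) h
    set n : ℝ := (Fintype.card Ω : ℝ) with hn
    have hn0 : 0 ≤ n := Nat.cast_nonneg _
    set L : ℝ := max Mp (2 * K / c) with hL
    have hL0 : 0 ≤ L := le_trans hMp0 (le_max_left _ _)
    set D : ℝ := n * L + B + 1 with hD
    have hD0 : 0 < D := by positivity
    set δ : ℝ := min (c / 2) (ε / (2 * D)) with hδ
    have hδ0 : 0 < δ := lt_min (by linarith) (by positivity)
    -- the neighborhood event
    have hmem : Metric.ball (fun ω : Ω => q {ω}) δ ∈ 𝓝 (fun ω : Ω => q {ω}) :=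
      Metric.ball_mem_nhds _ hδ0
    have hcom : (fun p : Set Ω → ℝ => fun ω : Ω => p {ω}) ⁻¹'
        Metric.ball (fun ω : Ω => q {ω}) δ ∈ @nhds _ (singletonTopology Ω) q := by
      rw [singletonTopology, nhds_induced]
      exact Filter.preimage_mem_comap hmem
    have hnear : ∀ᶠ p in 𝓝[H] q, ∀ ω, |p {ω} - q {ω}| < δ := by
      apply Filter.Eventually.filter_mono nhdsWithin_le_nhds
      filter_upwards [hcom] with p hp ω
      have h1 := dist_le_pi_dist (fun ω : Ω => p {ω}) (fun ω : Ω => q {ω}) ω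
      have h2 : dist (fun ω : Ω => p {ω}) (fun ω : Ω => q {ω}) < δ := hp
      rw [← Real.dist_eq]
      exact lt_of_le_of_lt h1 h2
    filter_upwards [hnear, self_mem_nhdsWithin] with p hpnear hpH
    -- the estimate
    have hδc : δ ≤ c / 2 := min_le_left _ _
    have hδε : δ ≤ ε / (2 * D) := min_le_right _ _
    -- lower bound on g p
    have hgpB : -B ≤ g p := by
      have h1 := hprop p q hpH hq
      have h2 : -B ≤ ∑ ω, p {ω} * (s q ω).toReal := by
        rw [hB, ← Finset.sum_neg_distrib]
        apply Finset.sum_le_sum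
        intro ω _
        have hp1 : p {ω} ≤ 1 := by
          have := hsum p hpH
          have h3 := Finset.single_le_sum (f := fun ω => p {ω})
            (fun i _ => hnn p hpH i) (Finset.mem_univ ω)
          linarith
        have := abs_nonneg ((s q ω).toReal)
        nlinarith [neg_abs_le ((s q ω).toReal), hnn p hpH ω]
      linarith
    -- lower direction: g q - g p ≤ δ * B
    have hlow : g q - g p ≤ δ * B := by
      have h1 := hprop p q hpH hq
      have h2 : g q - ∑ ω, p {ω} * (s q ω).toReal
          = ∑ ω, (q {ω} - p {ω}) * (s q ω).toReal := by
        rw [hgdef, ← Finset.sum_sub_distrib]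
        exact Finset.sum_congr rfl fun ω _ => by ring
      have h3 : ∑ ω, (q {ω} - p {ω}) * (s q ω).toReal ≤ ∑ ω, δ * |(s q ω).toReal| := by
        apply Finset.sum_le_sum
        intro ω _
        calc (q {ω} - p {ω}) * (s q ω).toReal ≤ |(q {ω} - p {ω}) * (s q ω).toReal| :=
              le_abs_self _
          _ = |q {ω} - p {ω}| * |(s q ω).toReal| := abs_mul _ _
          _ ≤ δ * |(s q ω).toReal| := by
              apply mul_le_mul_of_nonneg_right _ (abs_nonneg _)
              rw [abs_sub_comm]
              exact (hpnear ω).le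
      rw [← Finset.mul_sum] at h3
      linarith
    -- upper direction: g p - g q ≤ δ * (n * L)
    have hup : g p - g q ≤ δ * (n * L) := by
      have h1 := hprop q p hq hpH
      have h2 : g p - ∑ ω, q {ω} * (s p ω).toReal
          = ∑ ω, (p {ω} - q {ω}) * (s p ω).toReal := by
        rw [hgdef, ← Finset.sum_sub_distrib]
        exact Finset.sum_congr rfl fun ω _ => by ring
      have h3 : ∑ ω, (p {ω} - q {ω}) * (s p ω).toReal ≤ ∑ ω : Ω, δ * L := by
        apply Finset.sum_le_sum
        intro ω _
        rcases eq_or_lt_of_le (hnn q hq ω) with hq0 | hq0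
        · -- q {ω} = 0
          have hpδ : p {ω} < δ := by
            have := hpnear ω
            rw [← hq0] at this
            rw [abs_sub_comm, abs_sub_lt_iff] at this
            linarith [this.2]
          have hrM : (s p ω).toReal ≤ Mp := le_trans (hsM p hpH ω) (le_max_left _ _)
          have hMpL : Mp ≤ L := le_max_left _ _
          have hpn := hnn p hpH ω
          nlinarith
        · -- q {ω} > 0
          have hcq : c ≤ q {ω} := hcle ω hq0
          have hpc : c / 2 ≤ p {ω} := by
            have := hpnear ω
            rw [abs_sub_lt_iff] at this
            linarith [this.2]
          have hppos : 0 < p {ω} := lt_of_lt_of_le (by linarith) hpc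
          -- p {ω} * r ≥ -K
          have hterm : -K ≤ p {ω} * (s p ω).toReal := by
            have hsplit := Finset.add_sum_erase Finset.univ
              (fun ω => p {ω} * (s p ω).toReal) (Finset.mem_univ ω)
            have hrest : ∑ ω' ∈ Finset.univ.erase ω, p {ω'} * (s p ω').toReal ≤ Mp := by
              have h4 : ∑ ω' ∈ Finset.univ.erase ω, p {ω'} * (s p ω').toReal
                  ≤ ∑ ω' ∈ Finset.univ.erase ω, p {ω'} * Mp := by
                apply Finset.sum_le_sum
                intro ω' _
                exact mul_le_mul_of_nonneg_left
                  ((hsM p hpH ω').trans (le_max_left M 0)) (hnn p hpH ω')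
              have h5 : ∑ ω' ∈ Finset.univ.erase ω, p {ω'} ≤ 1 := by
                have h6 : ∑ ω' ∈ Finset.univ.erase ω, p {ω'} ≤ ∑ ω', p {ω'} :=
                  Finset.sum_le_sum_of_subset_of_nonneg (Finset.erase_subset _ _)
                    (fun i _ _ => hnn p hpH i)
                rw [hsum p hpH] at h6
                exact h6
              rw [← Finset.sum_mul] at h4
              nlinarith
            have hgp : g p = p {ω} * (s p ω).toReal
                + ∑ ω' ∈ Finset.univ.erase ω, p {ω'} * (s p ω').toReal := by
              rw [hgdef]; exact hsplit.symm
            linarith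
          -- hence r ≥ -(2K/c)
          have hrlow : -(2 * K / c) ≤ (s p ω).toReal := by
            rcases le_or_gt 0 ((s p ω).toReal) with h | h
            · have : 0 ≤ 2 * K / c := by positivity
              linarith
            · have h7 : (2 * K / c) * (c / 2) = K := by field_simp
              nlinarith
          have hrup : (s p ω).toReal ≤ L :=
            le_trans (hsM p hpH ω) (le_trans (le_max_left _ _) (le_max_left _ _))
          have habs : |(s p ω).toReal| ≤ L := by
            rw [abs_le]
            exact ⟨le_trans (neg_le_neg (le_max_right _ _)) hrlow, hrup⟩
          calc (p {ω} - q {ω}) * (s p ω).toReal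
              ≤ |(p {ω} - q {ω}) * (s p ω).toReal| := le_abs_self _
            _ = |p {ω} - q {ω}| * |(s p ω).toReal| := abs_mul _ _
            _ ≤ δ * L := mul_le_mul (hpnear ω).le habs (abs_nonneg _) hδ0.le
      rw [Finset.sum_const, Finset.card_univ, nsmul_eq_mul] at h3
      have : (Fintype.card Ω : ℝ) * (δ * L) = δ * (n * L) := by rw [hn]; ring
      linarith
    -- combine
    rw [Real.dist_eq, abs_sub_lt_iff]
    have hδD : δ * D ≤ ε / 2 := by
      calc δ * D ≤ (ε / (2 * D)) * D := mul_le_mul_of_nonneg_right hδε hD0.le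
        _ = ε / 2 := by field_simp
    have hnL : 0 ≤ n * L := mul_nonneg hn0 hL0
    have h8 : n * L ≤ D := by linarith
    have h9 : B ≤ D := by linarith
    have h10 : δ * (n * L) ≤ δ * D := mul_le_mul_of_nonneg_left h8 hδ0.le
    have h11 : δ * B ≤ δ * D := mul_le_mul_of_nonneg_left h9 hδ0.le
    have hεε : ε / 2 < ε := by linarith
    constructor
    · exact lt_of_le_of_lt (hup.trans (h10.trans hδD)) hεε
    · exact lt_of_le_of_lt (hlow.trans (h11.trans hδD)) hεε
  -- transfer to EReal
  have contc : ContinuousOn (fun p => Real.toEReal (g p)) H :=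
    Continuous.comp_continuousOn (g := Real.toEReal) (f := g) (s := H)
      continuous_coe_real_ereal contg
  exact contc.congr fun p hp => expScore_real p (s p) hp.2
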